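/- arXiv:1201.6130 — 7 statements merged into one kernel-verified Lean document; each statement's English description precedes it below -/
import Mathlib

section
/- Let C be an n×n real positive definite matrix with entries c_{i,j}, and let θ_1,...,θ_n > 0 with θ = θ_1 + ... + θ_n. Then C ≤ θ·diag(c_{1,1}/θ_1, ..., c_{n,n}/θ_n) in the Loewner order, i.e., the matrix θ·diag(c_{i,i}/θ_i) − C is positive semidefinite. -/
open Matrix Finset

/-!
Writing `Θ = ∑ j, θ j`, the matrix `diagonal (Θ * (C i i / θ i)) - C` is the Hadamard product of
`C` with `diagonal (Θ / θ i) - of 1` (`of 1` is the all-ones matrix), whose quadratic form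
`Θ * ∑ x i ^ 2 / θ i - (∑ x i) ^ 2` is nonnegative by Cauchy–Schwarz. The Schur product theorem
concludes.
-/

lemma posSemidef_diagonal_sum_div_sub_of_one {ι : Type*} [Fintype ι] [DecidableEq ι]
    {θ : ι → ℝ} (hθ : ∀ i, 0 < θ i) :
    (diagonal (fun i => (∑ j, θ j) / θ i) - of 1).PosSemidef := by
  refine PosSemidef.of_dotProduct_mulVec_nonneg ?_ fun x => ?_
  · refine (isHermitian_diagonal _).sub ?_
    ext i j
    simp
  have cauchy_schwarz : (∑ i, x i) ^ 2 ≤ (∑ i, θ i) * ∑ i, x i ^ 2 / θ i :=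
    sum_sq_le_sum_mul_sum_of_sq_le_mul _ (fun i _ => (hθ i).le)
      (fun i _ => div_nonneg (sq_nonneg _) (hθ i).le)
      fun i _ => by rw [mul_div_cancel₀ _ (hθ i).ne']
  have quadratic_form : star x ⬝ᵥ ((diagonal (fun i => (∑ j, θ j) / θ i) - of 1) *ᵥ x) =
      (∑ i, θ i) * ∑ i, x i ^ 2 / θ i - (∑ i, x i) ^ 2 := by
    have hJ : (of 1 : Matrix ι ι ℝ) *ᵥ x = fun _ => ∑ i, x i := by ext; simp [mulVec, dotProduct]
    rw [sub_mulVec, dotProduct_sub, hJ]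
    simp only [star_trivial, dotProduct, mulVec_diagonal]
    rw [← sum_mul, ← sq, mul_sum]
    congr 1
    exact sum_congr rfl fun i _ => by ring
  rw [quadratic_form]
  linarith

theorem hadamard_diagonal_sub_of_one {ι α : Type*} [DecidableEq ι] [CommRing α]
    (C : Matrix ι ι α) (d : ι → α) :
    C ⊙ (diagonal d - of 1) = diagonal (fun i => C i i * d i) - C := by
  ext i j
  rcases eq_or_ne i j with rfl | h
  · simp [hadamard_apply, mul_sub]
  · simp [hadamard_apply, h]

theorem loewner_diag_bound (n : ℕ) (C : Matrix (Fin n) (Fin n) ℝ)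
    (hC : C.PosDef) (θ : Fin n → ℝ) (hθ : ∀ i, 0 < θ i) :
    (Matrix.diagonal (fun i => (∑ j, θ j) * (C i i / θ i)) - C).PosSemidef := by
  have hdiag : (fun i => (∑ j, θ j) * (C i i / θ i)) = fun i => C i i * ((∑ j, θ j) / θ i) := by
    ext i; ring
  rw [hdiag, ← hadamard_diagonal_sub_of_one]
  exact hC.posSemidef.hadamard (posSemidef_diagonal_sum_div_sub_of_one hθ)
end

section
/- Let C be an n×n real positive definite matrix, θ_1,...,θ_n ≥ 0, θ = Σθ_i, and let C̃ = diag(θ_i/c_{i,i}) where c_{i,i} are the diagonal entries of C (with the convention that terms with θ_i = 0 contribute 0). Then C·C̃·C ≤ θ·C in the Loewner order. -/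
/-!
With `y = C x`, the quadratic form of `C * diagonal (θ i / C i i) * C` at `x` is
`∑ i, θ i / C i i * y i ^ 2`. Cauchy–Schwarz for the semi-inner product `(u, v) ↦ u ⬝ᵥ C *ᵥ v`,
applied to the `i`-th basis vector and `x`, gives `y i ^ 2 ≤ C i i * (x ⬝ᵥ C *ᵥ x)`, so each
summand is at most `θ i * (x ⬝ᵥ C *ᵥ x)`.
-/

open Matrix Finset

namespace Matrix

variable {ι : Type*} [Fintype ι] [DecidableEq ι] {C : Matrix ι ι ℝ}

theorem PosSemidef.mulVec_apply_sq_le (hC : C.PosSemidef) (x : ι → ℝ) (i : ι) :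
    (C *ᵥ x) i ^ 2 ≤ C i i * (x ⬝ᵥ C *ᵥ x) := by
  have hcol : C.col i = C.row i := funext fun j => by simpa using hC.isHermitian.apply i j
  have hCS := (toBilin' C).apply_mul_apply_le_of_forall_zero_le
    (fun y => by simpa only [toBilin'_apply', star_trivial] using hC.dotProduct_mulVec_nonneg y)
    (Pi.single i 1) x
  simp only [toBilin'_apply', single_dotProduct, one_mul, mulVec_single, MulOpposite.op_one,
    hcol, one_smul, row_apply, dotProduct_comm x (C.row i)] at hCS
  exact (sq _).trans_le hCS

theorem PosSemidef.div_diag_mul_mulVec_apply_sq_le (hC : C.PosSemidef) {t : ℝ} (ht : 0 ≤ t)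
    (x : ι → ℝ) (i : ι) : t / C i i * (C *ᵥ x) i ^ 2 ≤ t * (x ⬝ᵥ C *ᵥ x) := by
  have hq : 0 ≤ x ⬝ᵥ C *ᵥ x := by simpa using hC.dotProduct_mulVec_nonneg x
  rcases (hC.diag_nonneg (i := i)).eq_or_lt with hii | hii
  · simpa [← hii] using mul_nonneg ht hq
  · calc t / C i i * (C *ᵥ x) i ^ 2 ≤ t / C i i * (C i i * (x ⬝ᵥ C *ᵥ x)) := by
          gcongr; exact hC.mulVec_apply_sq_le x i
      _ = t * (x ⬝ᵥ C *ᵥ x) := by field_simp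

theorem IsHermitian.dotProduct_mul_diagonal_mul_mulVec (hC : C.IsHermitian) (d x : ι → ℝ) :
    x ⬝ᵥ (C * diagonal d * C) *ᵥ x = ∑ i, d i * (C *ᵥ x) i ^ 2 := by
  have hsymm : x ᵥ* C = C *ᵥ x := by
    rw [← mulVec_transpose, ← conjTranspose_eq_transpose_of_trivial, hC.eq]
  rw [← mulVec_mulVec, ← mulVec_mulVec, dotProduct_mulVec, hsymm]
  simp only [dotProduct, mulVec_diagonal]
  exact sum_congr rfl fun i _ => by ring

theorem PosSemidef.sum_smul_sub_mul_diagonal_div_diag_mul (hC : C.PosSemidef)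
    (θ : ι → ℝ) (hθ : ∀ i, 0 ≤ θ i) :
    ((∑ j, θ j) • C - C * diagonal (fun i => θ i / C i i) * C).PosSemidef := by
  have hCDC : (C * diagonal (fun i => θ i / C i i) * C).IsHermitian := by
    simpa only [hC.isHermitian.eq] using
      isHermitian_conjTranspose_mul_mul C (isHermitian_diagonal fun i => θ i / C i i)
  refine .of_dotProduct_mulVec_nonneg ((hC.isHermitian.smul (.all _)).sub hCDC) fun x => ?_
  rw [star_trivial, sub_mulVec, dotProduct_sub, smul_mulVec, dotProduct_smul, smul_eq_mul,
    hC.isHermitian.dotProduct_mul_diagonal_mul_mulVec, sum_mul, sub_nonneg]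
  exact sum_le_sum fun i _ => hC.div_diag_mul_mulVec_apply_sq_le (hθ i) x i

end Matrix

theorem CCtilde_C_le_theta_C (n : ℕ) (C : Matrix (Fin n) (Fin n) ℝ)
    (hC : C.PosDef) (θ : Fin n → ℝ) (hθ : ∀ i, 0 ≤ θ i) :
    ((∑ j, θ j) • C - C * Matrix.diagonal (fun i => θ i / C i i) * C).PosSemidef :=
  hC.posSemidef.sum_smul_sub_mul_diagonal_div_diag_mul θ hθ
end

section
/- Let 0 < a < b and x > 0. Then the derivative with respect to x of sinh(a·x)/sinh(b·x) satisfies 0 > d/dx [sinh(ax)/sinh(bx)] > (a − b)·sinh(ax)/sinh(bx). -/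
/-!
With `f x = sinh (a x) / sinh (b x)` one has `f' / f = a coth (a x) - b coth (b x)`, and
`coth t - 1 = 2 / (exp (2 t) - 1)`. So `f' < 0` says that `t ↦ t coth t` increases, and
`f' > (a - b) f` says that `t ↦ (exp (2 t) - 1) / t` increases. Both follow from the fact that
the slope of a strictly convex function through the origin increases, applied to `sinh` on
`[0, ∞)` (via `2 cosh u sinh v = sinh (v + u) + sinh (v - u)`) and to `exp`.
-/

open Real Set

theorem strictConvexOn_sinh_Ici : StrictConvexOn ℝ (Ici 0) sinh :=
  strictConvexOn_of_deriv2_pos (convex_Ici 0) continuous_sinh.continuousOn fun x hx => by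
    rw [interior_Ici] at hx
    simpa [Real.deriv_sinh, Real.deriv_cosh] using hx

theorem StrictConvexOn.secant_from_zero_strictMonoOn {f : ℝ → ℝ}
    (hf : StrictConvexOn ℝ (Ici 0) f) : StrictMonoOn (fun t => (f t - f 0) / t) (Ioi 0) :=
  fun s hs t ht hst => by
    simpa using hf.secant_strict_mono self_mem_Ici (mem_Ici.2 (le_of_lt hs))
      (mem_Ici.2 (le_of_lt ht)) (ne_of_gt hs) (ne_of_gt ht) hst

theorem sinh_div_self_strictMonoOn : StrictMonoOn (fun t => sinh t / t) (Ioi 0) := by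
  simpa using strictConvexOn_sinh_Ici.secant_from_zero_strictMonoOn

theorem exp_sub_one_div_self_strictMonoOn : StrictMonoOn (fun t => (exp t - 1) / t) (Ioi 0) := by
  simpa using
    (strictConvexOn_exp.subset (subset_univ _) (convex_Ici 0)).secant_from_zero_strictMonoOn

theorem mul_cosh_mul_sinh_lt {u v : ℝ} (hu : 0 < u) (huv : u < v) :
    u * cosh u * sinh v < v * cosh v * sinh u := by
  have h := sinh_div_self_strictMonoOn (mem_Ioi.2 (sub_pos.2 huv))
    (mem_Ioi.2 (by linarith : 0 < v + u)) (by linarith : v - u < v + u)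
  rw [div_lt_div_iff₀ (by linarith) (by linarith), sinh_sub, sinh_add] at h
  linear_combination h / 2

theorem sinh_eq_exp_two_mul_sub_one_mul_exp_neg (t : ℝ) :
    sinh t = (exp (2 * t) - 1) / 2 * exp (-t) := by
  rw [sinh_eq, two_mul, exp_add, exp_neg]
  field_simp

theorem mul_sinh_mul_exp_neg_lt {u v : ℝ} (hu : 0 < u) (huv : u < v) :
    v * sinh u * exp (-v) < u * sinh v * exp (-u) := by
  have h := exp_sub_one_div_self_strictMonoOn (mem_Ioi.2 (by linarith : 0 < 2 * u))
    (mem_Ioi.2 (by linarith : 0 < 2 * v)) (by linarith : 2 * u < 2 * v)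
  rw [div_lt_div_iff₀ (by linarith) (by linarith)] at h
  simp only [sinh_eq_exp_two_mul_sub_one_mul_exp_neg]
  calc v * ((exp (2 * u) - 1) / 2 * exp (-u)) * exp (-v)
      = (exp (2 * u) - 1) * (2 * v) * (exp (-u) * exp (-v) / 4) := by ring
    _ < (exp (2 * v) - 1) * (2 * u) * (exp (-u) * exp (-v) / 4) := by gcongr
    _ = u * ((exp (2 * v) - 1) / 2 * exp (-v)) * exp (-u) := by ring

theorem hasDerivAt_sinh_mul_div_sinh_mul (a b x : ℝ) (hx : sinh (b * x) ≠ 0) :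
    HasDerivAt (fun y => sinh (a * y) / sinh (b * y))
      ((a * cosh (a * x) * sinh (b * x) - b * cosh (b * x) * sinh (a * x)) / sinh (b * x) ^ 2)
      x := by
  have h (c : ℝ) : HasDerivAt (fun y => sinh (c * y)) (c * cosh (c * x)) x := by
    simpa [mul_comm] using ((hasDerivAt_id x).const_mul c).sinh
  exact ((h a).div (h b) hx).congr_deriv (by ring)

theorem sinh_quotient_deriv_bounds (a b x : ℝ) (ha : 0 < a) (hab : a < b) (hx : 0 < x) :
    deriv (fun y => Real.sinh (a * y) / Real.sinh (b * y)) x < 0 ∧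
      (a - b) * (Real.sinh (a * x) / Real.sinh (b * x)) <
        deriv (fun y => Real.sinh (a * y) / Real.sinh (b * y)) x := by
  have hax : 0 < a * x := mul_pos ha hx
  have hax_lt_bx : a * x < b * x := mul_lt_mul_of_pos_right hab hx
  have hsinh : 0 < sinh (b * x) := sinh_pos_iff.2 (hax.trans hax_lt_bx)
  rw [(hasDerivAt_sinh_mul_div_sinh_mul a b x hsinh.ne').deriv]
  constructor
  · refine div_neg_of_neg_of_pos (lt_of_mul_lt_mul_left ?_ hx.le) (by positivity)
    linear_combination mul_cosh_mul_sinh_lt hax hax_lt_bx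
  · rw [show (a - b) * (sinh (a * x) / sinh (b * x))
        = (a - b) * sinh (a * x) * sinh (b * x) / sinh (b * x) ^ 2 by field_simp]
    refine div_lt_div_of_pos_right (lt_of_mul_lt_mul_left ?_ hx.le) (by positivity)
    have h := mul_sinh_mul_exp_neg_lt hax hax_lt_bx
    rw [← cosh_sub_sinh, ← cosh_sub_sinh] at h
    linear_combination h
end

section
/- Let a, b ≥ 0, c > 0 with b < c² + ac and d := a²/4 + b > 0, and let y solve the scalar Riccati initial value problem y' = y² + a·y − b with terminal condition y(T) = c, defined on (−∞, T]. Then for all t ≤ T, y(t) ≥ 1/(T − t + 1/(c + a/2)) − a/2. -/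
/-!
With `z = y + a / 2` the equation becomes `z' = z ^ 2 - d`. Wherever `z > 0`,
`(1 / z + t)' = d / z ^ 2 ≥ 0`, so `1 / z t ≤ T - t + 1 / z T` for `t ≤ T`, which is the bound.
This a priori bound also keeps `z` away from `0` on every interval `[t, T]` where `z > 0`,
so `z` cannot vanish on `(-∞, T]`.
-/

open Set

section Riccati

variable {z : ℝ → ℝ} {d T : ℝ}

theorem monotoneOn_inv_add_of_hasDerivAt_sq_sub {D : Set ℝ} (hD : Convex ℝ D) (hd : 0 ≤ d)
    (hz : ∀ t ∈ D, HasDerivAt z (z t ^ 2 - d) t) (hpos : ∀ t ∈ D, 0 < z t) :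
    MonotoneOn (fun t => (z t)⁻¹ + t) D := by
  have hderiv : ∀ t ∈ D,
      HasDerivAt (fun t => (z t)⁻¹ + t) (-(z t ^ 2 - d) / z t ^ 2 + 1) t := fun t ht =>
    ((hz t ht).inv (hpos t ht).ne').add (hasDerivAt_id t)
  refine monotoneOn_of_hasDerivWithinAt_nonneg hD
    (fun t ht => (hderiv t ht).continuousAt.continuousWithinAt)
    (fun t ht => (hderiv t (interior_subset ht)).hasDerivWithinAt) fun t ht => ?_
  have hzt := hpos t (interior_subset ht)
  have : -(z t ^ 2 - d) / z t ^ 2 + 1 = d / z t ^ 2 := by field_simp; ring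
  rw [this]
  positivity

theorem one_div_le_of_hasDerivAt_sq_sub_of_pos {t : ℝ} (hd : 0 ≤ d)
    (hz : ∀ u ∈ Icc t T, HasDerivAt z (z u ^ 2 - d) u) (hpos : ∀ u ∈ Icc t T, 0 < z u)
    (htT : t ≤ T) : 1 / (T - t + 1 / z T) ≤ z t := by
  have hmono := monotoneOn_inv_add_of_hasDerivAt_sq_sub (convex_Icc t T) hd hz hpos
    (left_mem_Icc.2 htT) (right_mem_Icc.2 htT) htT
  have hzt := hpos t (left_mem_Icc.2 htT)
  have hzT := hpos T (right_mem_Icc.2 htT)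
  have := sub_nonneg.2 htT
  rw [one_div, one_div, inv_le_comm₀ (by positivity) hzt]
  simp only at hmono
  linarith

theorem pos_of_forall_pos_Icc_imp_le {f : ℝ → ℝ} (hz : ∀ t ≤ T, ContinuousAt z t)
    (hf : ∀ t ≤ T, ContinuousAt f t) (hf₀ : ∀ t ≤ T, 0 < f t) (hzT : 0 < z T)
    (hbound : ∀ t ≤ T, (∀ u ∈ Icc t T, 0 < z u) → f t ≤ z t) : ∀ t ≤ T, 0 < z t := by
  by_contra! ⟨t₀, ht₀, hzt₀⟩
  set S := Icc t₀ T ∩ z ⁻¹' Iic 0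
  have hS : IsCompact S := isCompact_Icc.of_isClosed_subset
    ((continuousOn_of_forall_continuousAt fun t ht => hz t ht.2).preimage_isClosed_of_isClosed
      isClosed_Icc isClosed_Iic) inter_subset_left
  obtain ⟨⟨ht₀s, hsT⟩, hzs⟩ : sSup S ∈ S := hS.sSup_mem ⟨t₀, ⟨le_rfl, ht₀⟩, hzt₀⟩
  set s := sSup S
  have hpos_right : ∀ u ∈ Ioc s T, 0 < z u := fun u hu => by
    by_contra! hzu
    exact hu.1.not_ge (le_csSup hS.bddAbove ⟨⟨ht₀s.trans hu.1.le, hu.2⟩, hzu⟩)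
  have hsT' : s < T := hsT.lt_of_ne fun h => by rw [h] at hzs; exact hzs.not_gt hzT
  have hfz : f s ≤ z s :=
    le_of_tendsto_of_tendsto ((hf s hsT).tendsto.mono_left nhdsWithin_le_nhds)
      ((hz s hsT).tendsto.mono_left nhdsWithin_le_nhds) <| by
      filter_upwards [Ioc_mem_nhdsGT hsT'] with u hu
      exact hbound u hu.2 fun v hv => hpos_right v ⟨hu.1.trans_le hv.1, hv.2⟩
  exact (hf₀ s hsT).not_ge (hfz.trans hzs)

theorem one_div_le_of_hasDerivAt_sq_sub (hd : 0 ≤ d)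
    (hz : ∀ t ≤ T, HasDerivAt z (z t ^ 2 - d) t) (hzT : 0 < z T) :
    ∀ t ≤ T, 1 / (T - t + 1 / z T) ≤ z t := by
  have hden : ∀ t ≤ T, 0 < T - t + 1 / z T := fun t ht => by
    have := sub_nonneg.2 ht
    positivity
  have hbound : ∀ t ≤ T, (∀ u ∈ Icc t T, 0 < z u) → 1 / (T - t + 1 / z T) ≤ z t :=
    fun t ht hpos => one_div_le_of_hasDerivAt_sq_sub_of_pos hd (fun u hu => hz u hu.2) hpos ht
  have hzpos := pos_of_forall_pos_Icc_imp_le (fun t ht => (hz t ht).continuousAt)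
    (fun t ht => continuousAt_const.div (by fun_prop) (hden t ht).ne')
    (fun t ht => one_div_pos.2 (hden t ht)) hzT hbound
  exact fun t ht => hbound t ht fun u hu => hzpos u hu.2

end Riccati

theorem riccati_lower_bound_general (a b c T : ℝ) (y : ℝ → ℝ)
    (ha : 0 ≤ a) (hc : 0 < c)
    (hd : 0 < a ^ 2 / 4 + b)
    (hode : ∀ t ≤ T, HasDerivAt y ((y t) ^ 2 + a * y t - b) t)
    (hT : y T = c) :
    ∀ t ≤ T, y t ≥ 1 / (T - t + 1 / (c + a / 2)) - a / 2 := by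
  set z : ℝ → ℝ := fun t => y t + a / 2
  have hz : ∀ t ≤ T, HasDerivAt z (z t ^ 2 - (a ^ 2 / 4 + b)) t := fun t ht =>
    ((hode t ht).add_const (a / 2)).congr_deriv (by simp only [z]; ring)
  have hzT : z T = c + a / 2 := by simp only [z, hT]
  intro t ht
  have hbound := one_div_le_of_hasDerivAt_sq_sub hd.le hz (by rw [hzT]; positivity) t ht
  rw [hzT] at hbound
  simp only [z] at hbound
  linarith

theorem riccati_lower_bound (a b c T : ℝ) (y : ℝ → ℝ)
    (ha : 0 ≤ a) (hb : 0 ≤ b) (hc : 0 < c) (hbc : b < c ^ 2 + a * c)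
    (hd : 0 < a ^ 2 / 4 + b)
    (hode : ∀ t ≤ T, HasDerivAt y ((y t) ^ 2 + a * y t - b) t)
    (hT : y T = c) :
    ∀ t ≤ T, y t ≥ 1 / (T - t + 1 / (c + a / 2)) - a / 2 :=
  riccati_lower_bound_general a b c T y ha hc hd hode hT
end

section
/- Let Λ > 0, ασ > 0, and define C(t;θ) := (Λθ̃/2)·coth((θ̃/2)(T − t)) − Λθ/2 for t < T, where θ̃ = √(θ² + 4ασ/Λ). Then for each fixed t < T, the map θ ↦ C(t;θ) is strictly decreasing on (0,∞); specifically ∂C/∂θ < 0 for all θ > 0. -/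
/-!
With `φ = √(θ² + c)`, `c = 4ασ/Λ` and `s = T - t`, the function splits as
`C θ = Λ/2 · ((φ coth (φ s / 2) - φ) + (φ - θ))`.
The second bracket is `c / (φ + θ)`, which decreases in `θ`. The first is `(2/s) · x / (eˣ - 1)`
at `x = φ s`; since `φ` increases with `θ`, it suffices that `x / (eˣ - 1)` decreases on
`(0, ∞)`, and this holds because its reciprocal `(eˣ - 1) / x` is a secant slope of the strictly
convex exponential.
-/

noncomputable def Real.coth (x : ℝ) : ℝ := Real.cosh x / Real.sinh x

open Real Set

theorem Real.coth_sub_one {x : ℝ} (hx : x ≠ 0) : coth x - 1 = 2 / (exp (2 * x) - 1) := by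
  rw [coth, div_sub_one (sinh_ne_zero.2 hx), cosh_sub_sinh, sinh_eq, two_mul, exp_add, exp_neg]
  field_simp

theorem strictAntiOn_div_exp_sub_one : StrictAntiOn (fun x : ℝ => x / (exp x - 1)) (Ioi 0) := by
  have secant : StrictMonoOn (fun x : ℝ => (exp x - 1) / x) (Ioi 0) := fun x hx y hy hxy => by
    simpa using strictConvexOn_exp.secant_strict_mono (mem_univ 0) (mem_univ x) (mem_univ y)
      hx.ne' (ne_of_gt hy) hxy
  refine (strictAntiOn_inv_pos.comp_strictMonoOn secant fun x hx => ?_).congr fun x _ => ?_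
  · have hx : 0 < x := hx
    exact div_pos (by linarith [add_one_lt_exp hx.ne']) hx
  · simp

theorem strictAnti_sqrt_sq_add_sub_self {c : ℝ} (hc : 0 < c) :
    StrictAnti fun θ : ℝ => √(θ ^ 2 + c) - θ := by
  intro θ₁ θ₂ hθ
  have hsq : √(θ₁ ^ 2 + c) ^ 2 = θ₁ ^ 2 + c := sq_sqrt (by positivity)
  have hlt : θ₁ < √(θ₁ ^ 2 + c) := calc
    θ₁ ≤ |θ₁| := le_abs_self θ₁
    _ = √(θ₁ ^ 2) := (sqrt_sq_eq_abs θ₁).symm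
    _ < √(θ₁ ^ 2 + c) := sqrt_lt_sqrt (sq_nonneg _) (by linarith)
  have : √(θ₂ ^ 2 + c) < √(θ₁ ^ 2 + c) + (θ₂ - θ₁) := by
    rw [sqrt_lt' (by linarith [sqrt_nonneg (θ₁ ^ 2 + c)])]
    nlinarith
  simp only
  linarith

theorem strictMonoOn_sqrt_sq_add {c : ℝ} (hc : 0 ≤ c) :
    StrictMonoOn (fun θ : ℝ => √(θ ^ 2 + c)) (Ici 0) := fun θ₁ hθ₁ θ₂ _ hθ =>
  sqrt_lt_sqrt (by positivity) (by gcongr)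

theorem strictAntiOn_mul_coth_sub_self {s : ℝ} (hs : 0 < s) :
    StrictAntiOn (fun u => u * coth (u / 2 * s) - u) (Ioi 0) := by
  have hscaled : StrictAntiOn (fun u => 2 / s * (u * s / (exp (u * s) - 1))) (Ioi 0) :=
    fun u hu v hv huv => mul_lt_mul_of_pos_left
      (strictAntiOn_div_exp_sub_one (mul_pos hu hs) (mul_pos hv hs)
        (mul_lt_mul_of_pos_right huv hs)) (by positivity)
  refine hscaled.congr fun u hu => ?_
  have hu₀ : u / 2 * s ≠ 0 := by have : (0 : ℝ) < u := hu; positivity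
  rw [← mul_sub_one, coth_sub_one hu₀, show 2 * (u / 2 * s) = u * s by ring]
  field_simp

theorem value_fn_strict_anti_in_theta (Λ ασ T t : ℝ)
    (hΛ : 0 < Λ) (hασ : 0 < ασ) (ht : t < T)
    (C : ℝ → ℝ)
    (hC : C = fun θ =>
      Λ * Real.sqrt (θ ^ 2 + 4 * ασ / Λ) / 2 *
        Real.coth (Real.sqrt (θ ^ 2 + 4 * ασ / Λ) / 2 * (T - t)) - Λ * θ / 2) :
    StrictAntiOn C (Set.Ioi 0) := by
  subst hC
  set c := 4 * ασ / Λ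
  have hc : 0 < c := by positivity
  have hφ : StrictMonoOn (fun θ : ℝ => √(θ ^ 2 + c)) (Ioi 0) :=
    (strictMonoOn_sqrt_sq_add hc.le).mono Ioi_subset_Ici_self
  have hcoth : StrictAntiOn (fun θ : ℝ => √(θ ^ 2 + c) * coth (√(θ ^ 2 + c) / 2 * (T - t))
      - √(θ ^ 2 + c)) (Ioi 0) :=
    (strictAntiOn_mul_coth_sub_self (sub_pos.2 ht)).comp_strictMonoOn hφ
      fun θ _ => sqrt_pos.2 (by positivity)
  have hsum := hcoth.add ((strictAnti_sqrt_sq_add_sub_self hc).strictAntiOn (Ioi 0))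
  intro a ha b hb hab
  have := mul_lt_mul_of_pos_left (hsum ha hb hab) (half_pos hΛ)
  simp only at this ⊢
  linarith
end

section
/- Let Λ > 0, ασ > 0, θ ≥ 0, θ̃ = √(θ² + 4ασ/Λ), T > 0, x > 0, and define the optimal trajectory X̃(t;θ) := x·sinh((θ̃/2)(T − t))·exp((θ/2)t)/sinh((θ̃/2)T) for t ∈ [0,T). Then X̃(0;θ) = x, X̃ is strictly decreasing in t on [0,T), lim_{t→T⁻} X̃(t;θ) = 0, and for each fixed t ∈ (0,T), X̃(t;θ) is strictly increasing in θ. -/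
/-!
Write `a = θ̃ / 2`, so that `|θ| / 2 < a`. Expanding `sinh`, the numerator
`sinh (a (T - t)) e^{θ t / 2}` is `(e^{a T + (θ/2 - a) t} - e^{-a T + (θ/2 + a) t}) / 2`, strictly
decreasing in `t`. For the dependence on `θ`, factor
`X̃ = x e^{(θ/2 - a) t} (1 - e^{-2a(T - t)}) / (1 - e^{-2a T})`: the first factor increases with `θ`
since `θ̃ - θ = (4ασ/Λ) / (θ̃ + θ)` decreases, and the second increases with `a` (which grows
with `θ ≥ 0`) since
`s ↦ (1 - e^{-s u}) / (1 - e^{-s v})` is increasing for `0 < u < v`; differentiating, the latter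
reduces to the convexity of `exp` (the slope `(e^y - 1) / y` increases).
-/

open Real Set

lemma mul_exp_sub_one_lt {y z : ℝ} (hy : 0 < y) (hyz : y < z) :
    z * (exp y - 1) < y * (exp z - 1) := by
  have h := strictConvexOn_exp.secant_strict_mono (a := 0) (mem_univ _) (mem_univ y) (mem_univ z)
    hy.ne' (hy.trans hyz).ne' hyz
  rw [exp_zero, sub_zero, sub_zero, div_lt_div_iff₀ hy (hy.trans hyz)] at h
  linarith

lemma hasDerivAt_one_sub_exp_neg_mul (u a : ℝ) :
    HasDerivAt (fun a => 1 - exp (-(a * u))) (u * exp (-(a * u))) a := by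
  have h : HasDerivAt (fun a => -(a * u)) (-u) a := (hasDerivAt_mul_const u).neg
  exact (h.exp.const_sub 1).congr_deriv (by ring)

lemma one_sub_exp_neg_mul_div_strictMonoOn {u v : ℝ} (hu : 0 < u) (huv : u < v) :
    StrictMonoOn (fun a => (1 - exp (-(a * u))) / (1 - exp (-(a * v)))) (Ioi 0) := by
  have hden : ∀ a ∈ Ioi (0 : ℝ), 0 < 1 - exp (-(a * v)) := fun a (ha : 0 < a) =>
    sub_pos.2 (exp_lt_one_iff.2 (by nlinarith))
  refine strictMonoOn_of_deriv_pos (convex_Ioi 0)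
    (by fun_prop (disch := exact fun a ha => (hden a ha).ne')) ?_
  rw [interior_Ioi]
  intro a (ha : 0 < a)
  have hderiv : HasDerivAt (fun a => (1 - exp (-(a * u))) / (1 - exp (-(a * v)))) _ a :=
    (hasDerivAt_one_sub_exp_neg_mul u a).div (hasDerivAt_one_sub_exp_neg_mul v a) (hden a ha).ne'
  have hslope : v * (exp (a * u) - 1) < u * (exp (a * v) - 1) := by
    have := mul_exp_sub_one_lt (mul_pos ha hu) (mul_lt_mul_of_pos_left huv ha)
    nlinarith
  have hnum :
      u * exp (-(a * u)) * (1 - exp (-(a * v))) - (1 - exp (-(a * u))) * (v * exp (-(a * v)))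
      = (u * (exp (a * v) - 1) - v * (exp (a * u) - 1)) / (exp (a * u) * exp (a * v)) := by
    rw [exp_neg, exp_neg]
    field_simp
  rw [hderiv.deriv, hnum]
  exact div_pos (div_pos (by linarith) (by positivity)) (pow_pos (hden a ha) 2)

lemma sinh_eq_exp_mul_one_sub (y : ℝ) : sinh y = exp y * (1 - exp (-(2 * y))) / 2 := by
  rw [sinh_eq, mul_sub, mul_one, ← exp_add]
  ring_nf

lemma sinh_mul_exp_div_sinh (a θ t T : ℝ) :
    sinh (a * (T - t)) * exp (θ / 2 * t) / sinh (a * T)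
      = exp ((θ / 2 - a) * t) *
          ((1 - exp (-(a * (2 * (T - t))))) / (1 - exp (-(a * (2 * T))))) := by
  have hexp : exp (a * (T - t)) * exp (θ / 2 * t) = exp ((θ / 2 - a) * t) * exp (a * T) := by
    rw [← exp_add, ← exp_add]
    ring_nf
  rw [sinh_eq_exp_mul_one_sub, sinh_eq_exp_mul_one_sub, div_mul_eq_mul_div, mul_right_comm,
    hexp, mul_assoc, div_div_div_cancel_right₀ two_ne_zero, mul_div_assoc,
    mul_div_mul_left _ _ (exp_pos _).ne', mul_left_comm 2 a, mul_left_comm 2 a]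

lemma sinh_mul_sub_mul_exp_strictAnti {a θ T : ℝ} (ha : |θ / 2| < a) :
    StrictAnti fun t => sinh (a * (T - t)) * exp (θ / 2 * t) := by
  have hsplit : ∀ t, sinh (a * (T - t)) * exp (θ / 2 * t)
      = (exp (a * T + (θ / 2 - a) * t) - exp (-(a * T) + (θ / 2 + a) * t)) / 2 := by
    intro t
    rw [sinh_eq, div_mul_eq_mul_div, sub_mul, ← exp_add, ← exp_add]
    ring_nf
  obtain ⟨h₁, h₂⟩ := abs_lt.1 ha
  intro s t hst
  have hdecr := exp_lt_exp.2 (by nlinarith : a * T + (θ / 2 - a) * t < a * T + (θ / 2 - a) * s)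
  have hincr :=
    exp_lt_exp.2 (by nlinarith : -(a * T) + (θ / 2 + a) * s < -(a * T) + (θ / 2 + a) * t)
  simp only [hsplit]
  linarith

lemma sqrt_sq_add_sub_strictAnti {c : ℝ} (hc : 0 < c) :
    StrictAnti fun θ => √(θ ^ 2 + c) - θ := by
  intro θ₁ θ₂ h
  have hθ₁ : θ₁ < √(θ₁ ^ 2 + c) := lt_sqrt_of_sq_lt (by linarith)
  have hsq₁ := sq_sqrt (by positivity : 0 ≤ θ₁ ^ 2 + c)
  have : √(θ₂ ^ 2 + c) < √(θ₁ ^ 2 + c) + (θ₂ - θ₁) :=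
    (sqrt_lt' (by linarith [sqrt_nonneg (θ₁ ^ 2 + c)])).2
      (by nlinarith [mul_pos (sub_pos.2 h) (sub_pos.2 hθ₁)])
  show √(θ₂ ^ 2 + c) - θ₂ < √(θ₁ ^ 2 + c) - θ₁
  linarith

/-- The paper's `X̃(t; θ)`, with `a = θ̃ / 2`. -/
noncomputable def optimalTrajectory (x T a θ t : ℝ) : ℝ :=
  x * sinh (a * (T - t)) * exp (θ / 2 * t) / sinh (a * T)

section

variable {x T a θ : ℝ}

lemma optimalTrajectory_zero (h : a * T ≠ 0) : optimalTrajectory x T a θ 0 = x := by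
  simp [optimalTrajectory, sinh_eq_zero.not.2 h]

lemma optimalTrajectory_self : optimalTrajectory x T a θ T = 0 := by
  simp [optimalTrajectory]

lemma continuous_optimalTrajectory : Continuous (optimalTrajectory x T a θ) := by
  unfold optimalTrajectory
  fun_prop

lemma optimalTrajectory_strictAnti (hx : 0 < x) (hT : 0 < T) (ha : |θ / 2| < a) :
    StrictAnti (optimalTrajectory x T a θ) := by
  have hD : 0 < sinh (a * T) := sinh_pos_iff.2 (mul_pos ((abs_nonneg _).trans_lt ha) hT)
  intro s t hst
  simp only [optimalTrajectory, mul_assoc x]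
  gcongr x * ?_ / _
  exact sinh_mul_sub_mul_exp_strictAnti ha hst

end

lemma optimalTrajectory_lt_optimalTrajectory {x T t a₁ a₂ θ₁ θ₂ : ℝ} (hx : 0 < x) (ht : 0 < t)
    (htT : t < T) (ha₁ : 0 < a₁) (ha : a₁ < a₂) (hθa : θ₁ / 2 - a₁ < θ₂ / 2 - a₂) :
    optimalTrajectory x T a₁ θ₁ t < optimalTrajectory x T a₂ θ₂ t := by
  unfold optimalTrajectory
  rw [mul_assoc x, mul_div_assoc, sinh_mul_exp_div_sinh, mul_assoc x, mul_div_assoc,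
    sinh_mul_exp_div_sinh]
  have hratio := one_sub_exp_neg_mul_div_strictMonoOn (u := 2 * (T - t)) (v := 2 * T)
    (by linarith) (by linarith) ha₁ (ha₁.trans ha) ha
  have hnum : 0 < 1 - exp (-(a₁ * (2 * (T - t)))) :=
    sub_pos.2 (exp_lt_one_iff.2 (neg_lt_zero.2 (by nlinarith)))
  have hden : 0 < 1 - exp (-(a₁ * (2 * T))) :=
    sub_pos.2 (exp_lt_one_iff.2 (neg_lt_zero.2 (by nlinarith)))
  gcongr x * ?_
  exact mul_lt_mul'' (exp_lt_exp.2 (mul_lt_mul_of_pos_right hθa ht)) hratio (exp_pos _).le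
    (div_pos hnum hden).le

theorem optimal_trajectory_properties (Λ ασ T x : ℝ)
    (hΛ : 0 < Λ) (hασ : 0 < ασ) (hT : 0 < T) (hx : 0 < x)
    (X : ℝ → ℝ → ℝ)
    (hX : X = fun t θ =>
      x * Real.sinh (Real.sqrt (θ ^ 2 + 4 * ασ / Λ) / 2 * (T - t)) * Real.exp (θ / 2 * t) /
        Real.sinh (Real.sqrt (θ ^ 2 + 4 * ασ / Λ) / 2 * T)) :
    (∀ θ, 0 ≤ θ → X 0 θ = x) ∧
    (∀ θ, 0 ≤ θ → StrictAntiOn (fun t => X t θ) (Set.Ico 0 T)) ∧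
    (∀ θ, 0 ≤ θ → Filter.Tendsto (fun t => X t θ) (nhdsWithin T (Set.Iio T)) (nhds 0)) ∧
    (∀ t, 0 < t → t < T → ∀ θ₁ θ₂, 0 ≤ θ₁ → θ₁ < θ₂ → X t θ₁ < X t θ₂) := by
  set c := 4 * ασ / Λ
  have hc : 0 < c := by positivity
  have hX' : X = fun t θ => optimalTrajectory x T (√(θ ^ 2 + c) / 2) θ t := hX
  have habs (θ : ℝ) : |θ / 2| < √(θ ^ 2 + c) / 2 := by
    rw [abs_div, abs_two]
    gcongr
    exact (lt_sqrt (abs_nonneg θ)).2 (by rw [sq_abs]; linarith)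
  subst hX'
  refine ⟨fun θ _ => optimalTrajectory_zero (by positivity),
    fun θ _ => (optimalTrajectory_strictAnti hx hT (habs θ)).strictAntiOn _,
    fun θ _ => ?_, fun t ht htT θ₁ θ₂ hθ₁ hθ₁₂ => ?_⟩
  · exact (continuous_optimalTrajectory.tendsto' T 0 optimalTrajectory_self).mono_left
      nhdsWithin_le_nhds
  · have hsqrt : √(θ₁ ^ 2 + c) < √(θ₂ ^ 2 + c) := sqrt_lt_sqrt (by positivity) (by nlinarith)
    have hgap := sqrt_sq_add_sub_strictAnti hc hθ₁₂
    exact optimalTrajectory_lt_optimalTrajectory hx ht htT (by positivity) (by linarith)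
      (by linarith)
end

section
/- Let Λ > 0, ασ > 0, θ ≥ 0, θ̃ = √(θ² + 4ασ/Λ), T > 0, x > 0, and define E(t;θ) := x·sinh((θ̃/2)(T − t))·exp(−(θ/2)t)/sinh((θ̃/2)T) for t ∈ (0,T). Then for each fixed t ∈ (0,T), the map θ ↦ E(t;θ) is strictly decreasing on (0,∞). -/
/-!
With `u = θ̃ / 2`, which increases with `θ`, the expected position is
`x · (sinh (u (T - t)) / sinh (u T)) · exp (-θ t / 2)`, a product of two positive, strictly
decreasing factors. The ratio of sinh's decreases in `u` because the sign of its derivative is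
that of `(T - t) coth (u (T - t)) - T coth (u T)`, and `y ↦ y coth y` is strictly increasing on
`(0, ∞)`: its derivative is `(sinh y cosh y - y) / sinh² y`, positive since `sinh 2y > 2y`.
-/

open Real Set

theorem StrictAntiOn.mul_of_nonneg {α β : Type*} [Preorder α] [Semiring β] [PartialOrder β]
    [IsStrictOrderedRing β] {f g : α → β} {s : Set α} (hf : StrictAntiOn f s)
    (hg : StrictAntiOn g s) (hf₀ : ∀ a ∈ s, 0 ≤ f a) (hg₀ : ∀ a ∈ s, 0 ≤ g a) :
    StrictAntiOn (fun a => f a * g a) s :=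
  fun _ ha _ hb hab => mul_lt_mul'' (hf ha hb hab) (hg ha hb hab) (hf₀ _ hb) (hg₀ _ hb)

namespace Real

theorem self_lt_sinh_mul_cosh {y : ℝ} (hy : 0 < y) : y < sinh y * cosh y := by
  have := self_lt_sinh_iff.2 (mul_pos two_pos hy)
  rw [sinh_two_mul] at this
  linarith

theorem strictMonoOn_mul_cosh_div_sinh : StrictMonoOn (fun y => y * cosh y / sinh y) (Ioi 0) := by
  refine strictMonoOn_of_deriv_pos (convex_Ioi 0) ?_ fun y hy => ?_
  · exact ContinuousOn.div (by fun_prop) (by fun_prop) fun y hy => (sinh_pos_iff.2 hy).ne'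
  · rw [interior_Ioi] at hy
    have hs : 0 < sinh y := sinh_pos_iff.2 hy
    have hderiv : HasDerivAt (fun y => y * cosh y / sinh y)
        ((sinh y * cosh y - y) / sinh y ^ 2) y := by
      refine (((hasDerivAt_id' y).mul (hasDerivAt_cosh y)).div (hasDerivAt_sinh y)
        hs.ne').congr_deriv ?_
      simp only [Pi.mul_apply]
      linear_combination (-y / sinh y ^ 2) * cosh_sq_sub_sinh_sq y
    rw [hderiv.deriv]
    exact div_pos (sub_pos.2 (self_lt_sinh_mul_cosh hy)) (pow_pos hs 2)

theorem strictAntiOn_sinh_mul_div_sinh_mul {a b : ℝ} (ha : 0 < a) (hab : a < b) :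
    StrictAntiOn (fun u => sinh (u * a) / sinh (u * b)) (Ioi 0) := by
  refine strictAntiOn_of_deriv_neg (convex_Ioi 0) ?_ fun u hu => ?_
  · exact ContinuousOn.div (by fun_prop) (by fun_prop)
      fun u hu => (sinh_pos_iff.2 (mul_pos hu (ha.trans hab))).ne'
  · rw [interior_Ioi] at hu
    have hu : 0 < u := hu
    have hsa : 0 < sinh (u * a) := sinh_pos_iff.2 (mul_pos hu ha)
    have hsb : 0 < sinh (u * b) := sinh_pos_iff.2 (mul_pos hu (ha.trans hab))
    have hderiv : HasDerivAt (fun u => sinh (u * a) / sinh (u * b))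
        ((cosh (u * a) * a * sinh (u * b) - sinh (u * a) * (cosh (u * b) * b)) / sinh (u * b) ^ 2)
        u :=
      (hasDerivAt_mul_const a).sinh.div (hasDerivAt_mul_const b).sinh hsb.ne'
    rw [hderiv.deriv]
    refine div_neg_of_neg_of_pos ?_ (pow_pos hsb 2)
    have key := strictMonoOn_mul_cosh_div_sinh (mul_pos hu ha) (mul_pos hu (ha.trans hab))
      (mul_lt_mul_of_pos_left hab hu)
    rw [div_lt_div_iff₀ hsa hsb] at key
    nlinarith

end Real

theorem expected_position_strict_anti_in_theta_general (Λ ασ T x t : ℝ)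
    (hΛ : 0 < Λ) (hασ : 0 < ασ) (hx : 0 < x) (ht0 : 0 < t) (htT : t < T)
    (E : ℝ → ℝ)
    (hE : E = fun θ =>
      x * Real.sinh (Real.sqrt (θ ^ 2 + 4 * ασ / Λ) / 2 * (T - t)) * Real.exp (-(θ / 2) * t) /
        Real.sinh (Real.sqrt (θ ^ 2 + 4 * ασ / Λ) / 2 * T)) :
    StrictAntiOn E (Set.Ioi 0) := by
  have hc : 0 ≤ 4 * ασ / Λ := by positivity
  have hrate_pos : MapsTo (fun θ => √(θ ^ 2 + 4 * ασ / Λ) / 2) (Ioi 0) (Ioi 0) := fun θ hθ =>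
    div_pos (sqrt_pos.2 (add_pos_of_pos_of_nonneg (pow_pos hθ 2) hc)) two_pos
  have hrate_mono : StrictMonoOn (fun θ => √(θ ^ 2 + 4 * ασ / Λ) / 2) (Ioi 0) :=
    fun θ₁ h₁ θ₂ _ h => by
      have : (0 : ℝ) < θ₁ := h₁
      dsimp only
      gcongr
  have hratio := (strictAntiOn_sinh_mul_div_sinh_mul (sub_pos.2 htT)
    (sub_lt_self T ht0)).comp_strictMonoOn hrate_mono hrate_pos
  have hdecay : StrictAntiOn (fun θ : ℝ => exp (-(θ / 2) * t)) (Ioi 0) := fun θ₁ _ θ₂ _ h => by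
    dsimp only
    gcongr
  have hprod := hratio.mul_of_nonneg hdecay
    (fun θ hθ => (div_pos (sinh_pos_iff.2 (mul_pos (hrate_pos hθ) (sub_pos.2 htT)))
      (sinh_pos_iff.2 (mul_pos (hrate_pos hθ) (ht0.trans htT)))).le)
    (fun θ _ => (exp_pos _).le)
  intro θ₁ h₁ θ₂ h₂ h
  convert mul_lt_mul_of_pos_left (hprod h₁ h₂ h) hx using 1 <;>
    simp only [hE, Function.comp_apply] <;> ring

theorem expected_position_strict_anti_in_theta (Λ ασ T x t : ℝ)
    (hΛ : 0 < Λ) (hασ : 0 < ασ) (hT : 0 < T) (hx : 0 < x) (ht0 : 0 < t) (htT : t < T)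
    (E : ℝ → ℝ)
    (hE : E = fun θ =>
      x * Real.sinh (Real.sqrt (θ ^ 2 + 4 * ασ / Λ) / 2 * (T - t)) * Real.exp (-(θ / 2) * t) /
        Real.sinh (Real.sqrt (θ ^ 2 + 4 * ασ / Λ) / 2 * T)) :
    StrictAntiOn E (Set.Ioi 0) :=
  expected_position_strict_anti_in_theta_general Λ ασ T x t hΛ hασ hx ht0 htT E hE
end
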